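/- An infinite group cannot be written as a finite union of subgroups each of infinite index. Equivalently, if a group G is a finite union of subgroups H_1 ∪ … ∪ H_k = G, then at least one H_i has finite index in G. -/
import Mathlib

open scoped Pointwise

theorem stmt19 (G : Type*) [Group G] (k : ℕ) (H : Fin k → Subgroup G)
    (hcover : (⋃ i, (H i : Set G)) = Set.univ) :
    ∃ i, (H i).FiniteIndex := by
  have hcovers : ⋃ i ∈ (Finset.univ : Finset (Fin k)),
      (fun _ : Fin k => (1 : G)) i • (H i : Set G) = Set.univ := by
    simpa using hcover
  obtain ⟨i, -, hi⟩ := Subgroup.exists_finiteIndex_of_leftCoset_cover hcovers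
  exact ⟨i, hi⟩
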